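/- Let R_1, R_2, R_3 > 0 and τ_1, τ_2, τ_3 > 0 with τ_1 + τ_2 + τ_3 = 1 and R_1/τ_1 < R_2/τ_2 < R_3/τ_3. Then (2^{R_1}-1)/(2^{R_1/τ_1}-1) + 2^{R_1}·(2^{R_2}-1)/(2^{R_2/τ_2}-1) + 2^{R_1+R_2}·(2^{R_3}-1)/(2^{R_3/τ_3}-1) < 1. -/

import Mathlib

/-!
Write `uₙ = 2 ^ (Rₙ / τₙ)`, so that `2 ^ Rₙ = uₙ ^ τₙ` and `1 < u₁ < u₂ < u₃`. Since `t ↦ t ^ β`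
is strictly concave for `0 < β < 1`, its secant slope `(v ^ β - 1) / (v - 1)` through `1` is
strictly decreasing in `v`. Hence replacing `u₃` by the smaller `u₂` in the last term strictly
increases the sum, and the last two terms then telescope to `u₁ ^ τ₁ (u₂ ^ (τ₂ + τ₃) - 1) / (u₂ - 1)`.
Repeating this with `u₂` replaced by `u₁` collapses everything to
`(u₁ ^ (τ₁ + τ₂ + τ₃) - 1) / (u₁ - 1) = 1`.
-/

open Real

lemma rpow_secant_one_lt {β x y : ℝ} (hβ₀ : 0 < β) (hβ₁ : β < 1) (hx : 0 ≤ x) (hx₁ : x ≠ 1)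
    (hy₁ : y ≠ 1) (hxy : x < y) :
    (y ^ β - 1) / (y - 1) < (x ^ β - 1) / (x - 1) := by
  simpa only [one_rpow] using (strictConcaveOn_rpow hβ₀ hβ₁).secant_strict_mono (a := 1)
    (by simp) (Set.mem_Ici.2 hx) (Set.mem_Ici.2 (hx.trans hxy.le)) hx₁ hy₁ hxy

lemma rpow_secant_add_lt (α : ℝ) {β u v : ℝ} (hβ₀ : 0 < β) (hβ₁ : β < 1) (hu : 0 < u)
    (hu₁ : u ≠ 1) (hv₁ : v ≠ 1) (huv : u < v) :
    (u ^ α - 1) / (u - 1) + u ^ α * ((v ^ β - 1) / (v - 1)) < (u ^ (α + β) - 1) / (u - 1) := by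
  have htelescope : (u ^ (α + β) - 1) / (u - 1)
      = (u ^ α - 1) / (u - 1) + u ^ α * ((u ^ β - 1) / (u - 1)) := by
    rw [rpow_add hu]
    field_simp [sub_ne_zero.2 hu₁]
    ring
  rw [htelescope, add_lt_add_iff_left]
  exact mul_lt_mul_of_pos_left (rpow_secant_one_lt hβ₀ hβ₁ hu.le hu₁ hv₁ huv) (rpow_pos_of_pos hu α)

lemma three_term_rpow_secant_sum_lt_one {u₁ u₂ u₃ τ₁ τ₂ τ₃ : ℝ} (hu₁ : 1 < u₁) (hu₁₂ : u₁ < u₂)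
    (hu₂₃ : u₂ < u₃) (hτ₁ : 0 < τ₁) (hτ₂ : 0 < τ₂) (hτ₃ : 0 < τ₃) (hτsum : τ₁ + τ₂ + τ₃ = 1) :
    (u₁ ^ τ₁ - 1) / (u₁ - 1) + u₁ ^ τ₁ * (u₂ ^ τ₂ - 1) / (u₂ - 1) +
        u₁ ^ τ₁ * u₂ ^ τ₂ * (u₃ ^ τ₃ - 1) / (u₃ - 1) < 1 := by
  calc (u₁ ^ τ₁ - 1) / (u₁ - 1) + u₁ ^ τ₁ * (u₂ ^ τ₂ - 1) / (u₂ - 1) +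
        u₁ ^ τ₁ * u₂ ^ τ₂ * (u₃ ^ τ₃ - 1) / (u₃ - 1)
      = (u₁ ^ τ₁ - 1) / (u₁ - 1) + u₁ ^ τ₁ *
          ((u₂ ^ τ₂ - 1) / (u₂ - 1) + u₂ ^ τ₂ * ((u₃ ^ τ₃ - 1) / (u₃ - 1))) := by ring
    _ < (u₁ ^ τ₁ - 1) / (u₁ - 1) + u₁ ^ τ₁ * ((u₂ ^ (τ₂ + τ₃) - 1) / (u₂ - 1)) := by
        gcongr _ + _ * ?_
        exact rpow_secant_add_lt τ₂ hτ₃ (by linarith) (by linarith) (by linarith) (by linarith)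
          hu₂₃
    _ < (u₁ ^ (τ₁ + (τ₂ + τ₃)) - 1) / (u₁ - 1) :=
        rpow_secant_add_lt τ₁ (by linarith) (by linarith) (by linarith) hu₁.ne' (by linarith)
          hu₁₂
    _ = 1 := by
        rw [← add_assoc, hτsum, rpow_one, div_self (sub_ne_zero.2 hu₁.ne')]

lemma rpow_eq_rpow_div_rpow {b : ℝ} (hb : 0 ≤ b) (R : ℝ) {τ : ℝ} (hτ : τ ≠ 0) :
    b ^ R = (b ^ (R / τ)) ^ τ := by
  rw [← rpow_mul hb, div_mul_cancel₀ R hτ]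

theorem stmt_16 (R₁ R₂ R₃ τ₁ τ₂ τ₃ : ℝ)
    (hR₁ : 0 < R₁)
    (hτ₁ : 0 < τ₁) (hτ₂ : 0 < τ₂) (hτ₃ : 0 < τ₃)
    (hτsum : τ₁ + τ₂ + τ₃ = 1)
    (hord₁ : R₁ / τ₁ < R₂ / τ₂) (hord₂ : R₂ / τ₂ < R₃ / τ₃) :
    ((2 : ℝ) ^ R₁ - 1) / ((2 : ℝ) ^ (R₁ / τ₁) - 1) +
        (2 : ℝ) ^ R₁ * ((2 : ℝ) ^ R₂ - 1) / ((2 : ℝ) ^ (R₂ / τ₂) - 1) +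
        (2 : ℝ) ^ (R₁ + R₂) * ((2 : ℝ) ^ R₃ - 1) / ((2 : ℝ) ^ (R₃ / τ₃) - 1) < 1 := by
  rw [rpow_add two_pos, rpow_eq_rpow_div_rpow zero_le_two R₁ hτ₁.ne',
    rpow_eq_rpow_div_rpow zero_le_two R₂ hτ₂.ne', rpow_eq_rpow_div_rpow zero_le_two R₃ hτ₃.ne']
  exact three_term_rpow_secant_sum_lt_one (one_lt_rpow one_lt_two (div_pos hR₁ hτ₁))
    (rpow_lt_rpow_of_exponent_lt one_lt_two hord₁) (rpow_lt_rpow_of_exponent_lt one_lt_two hord₂)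
    hτ₁ hτ₂ hτ₃ hτsum
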